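/- arXiv:1211.6760 — 2 statements merged into one kernel-verified Lean document; each statement's English description precedes it below -/
import Mathlib

section
/- There is an absolute constant C such that for every n ≥ 1, every monotone Boolean function f : {0,1}^n → {0,1}, and every real K > 1, one has Σ_{S ⊆ {0,…,n−1}, |S| > K√n} |f̂(S)|² ≤ C K^{−1}. -/
open Finset

/-- The von Mangoldt function on `ℕ` (with `Λ 0 = 0`). -/
noncomputable def vM : ℕ → ℝ := fun x => ArithmeticFunction.vonMangoldt x

/-- The `j`-th binary digit of `x`. -/
def bit (x j : ℕ) : ℕ := x / 2 ^ j % 2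

/-- The Walsh function `w_S(x) = ∏_{j ∈ S} (1 - 2 x_j)`. -/
noncomputable def walsh (S : Finset ℕ) (x : ℕ) : ℝ := ∏ j ∈ S, (1 - 2 * (bit x j : ℝ))

/-- Fourier–Walsh coefficient `ĝ(S) = 2^{-n} ∑_{x < 2^n} g(x) w_S(x)`. -/
noncomputable def fwCoeff (n : ℕ) (g : ℕ → ℝ) (S : Finset ℕ) : ℝ :=
  ((2 : ℝ) ^ n)⁻¹ * ∑ x ∈ range (2 ^ n), g x * walsh S x

/-- Expectation `E[g] = 2^{-n} ∑_{x < 2^n} g(x)`. -/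
noncomputable def expect (n : ℕ) (g : ℕ → ℝ) : ℝ :=
  ((2 : ℝ) ^ n)⁻¹ * ∑ x ∈ range (2 ^ n), g x

/-- Normalized inner product `⟨g, h⟩ = 2^{-n} ∑_{x < 2^n} g(x) h(x)`. -/
noncomputable def ip (n : ℕ) (g h : ℕ → ℝ) : ℝ :=
  ((2 : ℝ) ^ n)⁻¹ * ∑ x ∈ range (2 ^ n), g x * h x

/-- `f` is a Boolean function (with values `0` or `1`). -/
def IsBoolean (f : ℕ → ℝ) : Prop := ∀ x, f x = 0 ∨ f x = 1

/-- `f` is a monotone Boolean function on `{0,1}^n` (under binary-digit identification). -/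
def IsMonotoneBool (n : ℕ) (f : ℕ → ℝ) : Prop :=
  IsBoolean f ∧
    ∀ x y, x < 2 ^ n → y < 2 ^ n → (∀ j < n, bit x j ≤ bit y j) → f x ≤ f y

/-- The function `Λ̃(y) = ∑_{j < n, y_j = 0} Λ(y + 2^j)`. -/
noncomputable def vMtilde (n : ℕ) (y : ℕ) : ℝ :=
  ∑ j ∈ (range n).filter (fun j => bit y j = 0), vM (y + 2 ^ j)

/-!
For monotone Boolean `f`, flipping bit `j` from `0` to `1` can only raise `f`, so the influence
of coordinate `j` is `-f̂({j}) / 2`. Summing over `j`, Cauchy–Schwarz and Parseval bound the total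
influence `∑_S |S| f̂(S)²` by `√n / 2`, and Markov's inequality for the spectral weights `f̂(S)²`
bounds the weight above level `K √n` by `1 / (2 K)`.
-/

lemma bit_eq_ite_testBit (x j : ℕ) : bit x j = if x.testBit j then 1 else 0 := by
  rw [Nat.testBit_eq_decide_div_mod_eq, bit]
  rcases Nat.mod_two_eq_zero_or_one (x / 2 ^ j) with h | h <;> simp [h]

lemma one_sub_two_mul_bit (x j : ℕ) :
    1 - 2 * (bit x j : ℝ) = if x.testBit j then -1 else 1 := by
  rw [bit_eq_ite_testBit]; split <;> norm_num

lemma walsh_singleton (j x : ℕ) : walsh {j} x = 1 - 2 * (bit x j : ℝ) :=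
  prod_singleton _ _

lemma walsh_xor_two_pow (S : Finset ℕ) (j x : ℕ) :
    walsh S (x ^^^ 2 ^ j) = (if j ∈ S then -1 else 1) * walsh S x := by
  have hbit (i : ℕ) : 1 - 2 * (bit (x ^^^ 2 ^ j) i : ℝ)
      = (if i = j then -1 else 1) * (1 - 2 * (bit x i : ℝ)) := by
    simp only [one_sub_two_mul_bit, Nat.testBit_xor, Nat.testBit_two_pow]
    rcases eq_or_ne i j with rfl | h
    · cases x.testBit i <;> simp
    · simp [h, Ne.symm h]
  simp only [walsh, hbit, prod_mul_distrib, prod_ite_eq']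

lemma xor_two_pow_lt_two_pow {n j x : ℕ} (hj : j < n) (hx : x < 2 ^ n) : x ^^^ 2 ^ j < 2 ^ n :=
  Nat.xor_lt_two_pow hx (Nat.pow_lt_pow_right (by norm_num) hj)

lemma sum_range_two_pow_xor_two_pow {M : Type*} [AddCommMonoid M] {n j : ℕ} (hj : j < n)
    (F : ℕ → M) : ∑ x ∈ range (2 ^ n), F (x ^^^ 2 ^ j) = ∑ x ∈ range (2 ^ n), F x := by
  have hlt {x : ℕ} (hx : x ∈ range (2 ^ n)) : x ^^^ 2 ^ j ∈ range (2 ^ n) :=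
    mem_range.2 (xor_two_pow_lt_two_pow hj (mem_range.1 hx))
  exact sum_nbij' (· ^^^ 2 ^ j) (· ^^^ 2 ^ j) (fun _ hx => hlt hx) (fun _ hx => hlt hx)
    (fun x _ => xor_cancel_right x _) (fun x _ => xor_cancel_right x _) (fun _ _ => rfl)

lemma exists_lt_testBit_ne_of_ne {n x y : ℕ} (hx : x < 2 ^ n) (hy : y < 2 ^ n) (hxy : x ≠ y) :
    ∃ j < n, x.testBit j ≠ y.testBit j := by
  by_contra! h
  refine hxy (Nat.eq_of_testBit_eq fun i => ?_)
  rcases lt_or_ge i n with hi | hi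
  · exact h i hi
  · have hle : 2 ^ n ≤ 2 ^ i := Nat.pow_le_pow_right (by norm_num) hi
    rw [Nat.testBit_lt_two_pow (hx.trans_le hle), Nat.testBit_lt_two_pow (hy.trans_le hle)]

theorem sum_walsh_mul_walsh {n x y : ℕ} (hx : x < 2 ^ n) (hy : y < 2 ^ n) :
    ∑ S ∈ (range n).powerset, walsh S x * walsh S y = if x = y then 2 ^ n else 0 := by
  have hfactor (j : ℕ) : 1 + (1 - 2 * (bit x j : ℝ)) * (1 - 2 * (bit y j : ℝ))
      = if x.testBit j = y.testBit j then 2 else 0 := by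
    simp only [one_sub_two_mul_bit]
    cases x.testBit j <;> cases y.testBit j <;> norm_num
  calc ∑ S ∈ (range n).powerset, walsh S x * walsh S y
      = ∏ j ∈ range n, (1 + (1 - 2 * (bit x j : ℝ)) * (1 - 2 * (bit y j : ℝ))) := by
        rw [prod_one_add]
        simp only [walsh, prod_mul_distrib]
    _ = if x = y then 2 ^ n else 0 := by
        simp only [hfactor]
        split_ifs with hxy
        · simp [hxy]
        · obtain ⟨j, hj, hne⟩ := exists_lt_testBit_ne_of_ne hx hy hxy
          exact prod_eq_zero (mem_range.2 hj) (if_neg hne)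

theorem sum_sq_fwCoeff (n : ℕ) (g : ℕ → ℝ) :
    ∑ S ∈ (range n).powerset, fwCoeff n g S ^ 2 = ip n g g := by
  calc ∑ S ∈ (range n).powerset, fwCoeff n g S ^ 2
      = ((2 : ℝ) ^ n)⁻¹ ^ 2 * ∑ x ∈ range (2 ^ n), ∑ y ∈ range (2 ^ n),
          g x * g y * ∑ S ∈ (range n).powerset, walsh S x * walsh S y := by
        have hsq (S : Finset ℕ) : fwCoeff n g S ^ 2 = ((2 : ℝ) ^ n)⁻¹ ^ 2 *
            ∑ x ∈ range (2 ^ n), ∑ y ∈ range (2 ^ n), g x * g y * (walsh S x * walsh S y) := by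
          rw [fwCoeff, mul_pow, sq (∑ _ ∈ _, _), sum_mul_sum]
          exact congrArg _ (sum_congr rfl fun x _ => sum_congr rfl fun y _ => by ring)
        simp only [hsq, ← mul_sum]
        rw [sum_comm]
        refine congrArg _ (sum_congr rfl fun x _ => ?_)
        rw [sum_comm]
        simp only [mul_sum]
    _ = ((2 : ℝ) ^ n)⁻¹ ^ 2 * ∑ x ∈ range (2 ^ n), g x * g x * 2 ^ n := by
        refine congrArg _ (sum_congr rfl fun x hx => ?_)
        rw [sum_congr rfl fun y hy => by
          rw [sum_walsh_mul_walsh (mem_range.1 hx) (mem_range.1 hy), mul_ite, mul_zero]]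
        rw [sum_ite_eq, if_pos hx]
    _ = ip n g g := by
        rw [ip, ← sum_mul]
        field_simp

noncomputable def laplacian (j : ℕ) (f : ℕ → ℝ) (x : ℕ) : ℝ := (f x - f (x ^^^ 2 ^ j)) / 2

theorem fwCoeff_laplacian {n j : ℕ} (hj : j < n) (f : ℕ → ℝ) (S : Finset ℕ) :
    fwCoeff n (laplacian j f) S = if j ∈ S then fwCoeff n f S else 0 := by
  have hflip : ∑ x ∈ range (2 ^ n), f (x ^^^ 2 ^ j) * walsh S x
      = (if j ∈ S then -1 else 1) * ∑ x ∈ range (2 ^ n), f x * walsh S x := by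
    rw [← sum_range_two_pow_xor_two_pow hj, mul_sum]
    refine sum_congr rfl fun x _ => ?_
    rw [xor_cancel_right, walsh_xor_two_pow]
    ring
  have hsum : ∑ x ∈ range (2 ^ n), laplacian j f x * walsh S x
      = (∑ x ∈ range (2 ^ n), f x * walsh S x
          - ∑ x ∈ range (2 ^ n), f (x ^^^ 2 ^ j) * walsh S x) / 2 := by
    rw [← sum_sub_distrib, sum_div]
    exact sum_congr rfl fun x _ => by rw [laplacian]; ring
  rw [fwCoeff, fwCoeff, hsum, hflip]
  split_ifs <;> ring

/-- For Boolean `f`, `influence n j f` is a quarter of the probability that flipping bit `j`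
changes `f`. -/
noncomputable def influence (n j : ℕ) (f : ℕ → ℝ) : ℝ := ip n (laplacian j f) (laplacian j f)

theorem sum_filter_mem_sq_fwCoeff {n j : ℕ} (hj : j < n) (f : ℕ → ℝ) :
    ∑ S ∈ (range n).powerset with j ∈ S, fwCoeff n f S ^ 2 = influence n j f := by
  rw [influence, ← sum_sq_fwCoeff, sum_filter]
  refine sum_congr rfl fun S _ => ?_
  rw [fwCoeff_laplacian hj]
  split_ifs <;> simp

theorem sum_card_mul_sq_fwCoeff (n : ℕ) (f : ℕ → ℝ) :
    ∑ S ∈ (range n).powerset, (#S : ℝ) * fwCoeff n f S ^ 2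
      = ∑ j ∈ range n, influence n j f := by
  calc ∑ S ∈ (range n).powerset, (#S : ℝ) * fwCoeff n f S ^ 2
      = ∑ S ∈ (range n).powerset, ∑ j ∈ range n, if j ∈ S then fwCoeff n f S ^ 2 else 0 := by
        refine sum_congr rfl fun S hS => ?_
        rw [sum_ite_mem, inter_eq_right.2 (mem_powerset.1 hS), sum_const, nsmul_eq_mul]
    _ = ∑ j ∈ range n, influence n j f := by
        rw [sum_comm]
        exact sum_congr rfl fun j hj => by
          rw [← sum_filter, sum_filter_mem_sq_fwCoeff (mem_range.1 hj)]

theorem IsBoolean.ip_self_le_one {f : ℕ → ℝ} (hf : IsBoolean f) (n : ℕ) : ip n f f ≤ 1 := by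
  have hle : ∑ x ∈ range (2 ^ n), f x * f x ≤ 2 ^ n := by
    calc ∑ x ∈ range (2 ^ n), f x * f x ≤ ∑ _x ∈ range (2 ^ n), (1 : ℝ) :=
          sum_le_sum fun x _ => by rcases hf x with h | h <;> simp [h]
      _ = 2 ^ n := by simp
  rw [ip, inv_mul_le_iff₀ (by positivity), mul_one]
  exact hle

theorem sum_sq_fwCoeff_singleton_le (n : ℕ) (g : ℕ → ℝ) :
    ∑ j ∈ range n, fwCoeff n g {j} ^ 2 ≤ ip n g g := by
  rw [← sum_sq_fwCoeff]
  refine (sum_map (range n) ⟨_, singleton_injective⟩ fun S => fwCoeff n g S ^ 2).symm.trans_le ?_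
  refine sum_le_sum_of_subset_of_nonneg (fun S hS => ?_) fun S _ _ => sq_nonneg _
  obtain ⟨j, hj, rfl⟩ := mem_map.1 hS
  exact mem_powerset.2 (singleton_subset_iff.2 hj)

namespace IsMonotoneBool

variable {n j : ℕ} {f : ℕ → ℝ}

theorem le_apply_xor_two_pow (hf : IsMonotoneBool n f) (hj : j < n) {x : ℕ} (hx : x < 2 ^ n)
    (hxj : x.testBit j = false) : f x ≤ f (x ^^^ 2 ^ j) := by
  refine hf.2 x _ hx (xor_two_pow_lt_two_pow hj hx) fun i _ => ?_
  rw [bit_eq_ite_testBit, bit_eq_ite_testBit, Nat.testBit_xor, Nat.testBit_two_pow]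
  rcases eq_or_ne i j with rfl | h
  · simp [hxj]
  · simp [Ne.symm h]

/-- A monotone Boolean `f` only jumps up when bit `j` is switched on, so `L_j f` takes values
in `{0, -w_j / 2}`. -/
theorem laplacian_mul_walsh_singleton (hf : IsMonotoneBool n f) (hj : j < n) {x : ℕ}
    (hx : x < 2 ^ n) : laplacian j f x * walsh {j} x = -2 * laplacian j f x ^ 2 := by
  rw [walsh_singleton, one_sub_two_mul_bit, laplacian]
  cases hxj : x.testBit j
  · have hmono := hf.le_apply_xor_two_pow hj hx hxj
    rcases hf.1 x with h₁ | h₁ <;> rcases hf.1 (x ^^^ 2 ^ j) with h₂ | h₂ <;>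
      revert hmono <;> norm_num [h₁, h₂]
  · have hy : (x ^^^ 2 ^ j).testBit j = false := by simp [Nat.testBit_xor, hxj]
    have hmono := hf.le_apply_xor_two_pow hj (xor_two_pow_lt_two_pow hj hx) hy
    rw [xor_cancel_right] at hmono
    rcases hf.1 x with h₁ | h₁ <;> rcases hf.1 (x ^^^ 2 ^ j) with h₂ | h₂ <;>
      revert hmono <;> norm_num [h₁, h₂]

theorem influence_eq (hf : IsMonotoneBool n f) (hj : j < n) :
    influence n j f = -(1 / 2) * fwCoeff n f {j} := by
  have hcoeff : fwCoeff n f {j} = fwCoeff n (laplacian j f) {j} := by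
    rw [fwCoeff_laplacian hj, if_pos (mem_singleton_self j)]
  rw [hcoeff, fwCoeff, influence, ip, sum_congr rfl fun x hx =>
    hf.laplacian_mul_walsh_singleton hj (mem_range.1 hx), ← mul_sum]
  ring_nf

theorem sum_influence_le (hf : IsMonotoneBool n f) :
    ∑ j ∈ range n, influence n j f ≤ √n / 2 := by
  have hsq : (∑ j ∈ range n, -fwCoeff n f {j}) ^ 2 ≤ n :=
    calc (∑ j ∈ range n, -fwCoeff n f {j}) ^ 2
        ≤ n * ∑ j ∈ range n, (-fwCoeff n f {j}) ^ 2 := by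
          simpa using sq_sum_le_card_mul_sum_sq (s := range n)
      _ ≤ n * 1 := by
          simp only [neg_sq]
          gcongr
          exact (sum_sq_fwCoeff_singleton_le n f).trans (hf.1.ip_self_le_one n)
      _ = n := mul_one _
  calc ∑ j ∈ range n, influence n j f = (∑ j ∈ range n, -fwCoeff n f {j}) / 2 := by
        rw [sum_div]
        exact sum_congr rfl fun j hj => by rw [hf.influence_eq (mem_range.1 hj)]; ring
    _ ≤ √n / 2 := by gcongr; exact Real.le_sqrt_of_sq_le hsq

end IsMonotoneBool

theorem sum_filter_lt_card_sq_fwCoeff_le {t : ℝ} (ht : 0 < t) (n : ℕ) (g : ℕ → ℝ) :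
    ∑ S ∈ (range n).powerset with t < #S, fwCoeff n g S ^ 2
      ≤ t⁻¹ * ∑ S ∈ (range n).powerset, (#S : ℝ) * fwCoeff n g S ^ 2 := by
  rw [le_inv_mul_iff₀ ht, mul_sum]
  calc ∑ S ∈ (range n).powerset with t < #S, t * fwCoeff n g S ^ 2
      ≤ ∑ S ∈ (range n).powerset with t < #S, (#S : ℝ) * fwCoeff n g S ^ 2 :=
        sum_le_sum fun S hS => by gcongr; exact (mem_filter.1 hS).2.le
    _ ≤ ∑ S ∈ (range n).powerset, (#S : ℝ) * fwCoeff n g S ^ 2 :=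
        sum_le_sum_of_subset_of_nonneg (filter_subset _ _) fun S _ _ => by positivity

/-- Bshouty–Tamon tail estimate for monotone Boolean functions. -/
theorem monotone_boolean_fourier_tail :
    ∃ C : ℝ, ∀ n : ℕ, 1 ≤ n → ∀ f : ℕ → ℝ, IsMonotoneBool n f →
      ∀ K : ℝ, 1 < K →
      ∑ S ∈ (range n).powerset.filter (fun S => K * Real.sqrt n < (S.card : ℝ)),
        (fwCoeff n f S) ^ 2 ≤ C * K⁻¹ := by
  refine ⟨1 / 2, fun n hn f hf K hK => ?_⟩
  have hsqrt_pos : 0 < √(n : ℝ) := Real.sqrt_pos.2 (by exact_mod_cast hn)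
  calc ∑ S ∈ (range n).powerset with K * √n < #S, fwCoeff n f S ^ 2
      ≤ (K * √n)⁻¹ * ∑ S ∈ (range n).powerset, (#S : ℝ) * fwCoeff n f S ^ 2 :=
        sum_filter_lt_card_sq_fwCoeff_le (by positivity) n f
    _ ≤ (K * √n)⁻¹ * (√n / 2) := by
        rw [sum_card_mul_sq_fwCoeff]
        gcongr
        exact hf.sum_influence_le
    _ = 1 / 2 * K⁻¹ := by field_simp
end

section
/- Let f : {0,1}^n → {0,1} be a monotone Boolean function. Then ⟨Λ̃, f⟩ = 2^{−n} Σ_{0≤x<2^n} Λ(x) Σ_{j<n : x_j = 1} f(x − 2^j) ≤ 2^{−n} Σ_{0≤x<2^n} Λ(x) (Σ_{j<n} x_j) f(x) ≤ n · ⟨Λ, f⟩. -/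
open Finset

/-!
The pairs `(y, j)` with `y_j = 0` and the pairs `(x, j)` with `x_j = 1` both enumerate the edges
of the cube `{0,1}^n`, matched by `x = y + 2^j`; this reindexing turns `⟨Λ̃, f⟩` into the middle
sum. Monotonicity then gives `f (x - 2^j) ≤ f x` term by term, and `∑ j, x_j ≤ n` together with
`Λ, f ≥ 0` gives the last bound.
-/

lemma bit_le_one (x j : ℕ) : bit x j ≤ 1 :=
  Nat.le_of_lt_succ (Nat.mod_lt _ two_pos)

lemma bit_add_two_pow_self {y j : ℕ} (h : bit y j = 0) : bit (y + 2 ^ j) j = 1 := by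
  have hdiv : (y + 2 ^ j) / 2 ^ j = y / 2 ^ j + 1 := Nat.add_div_right y (by positivity)
  simp only [bit] at h ⊢
  omega

lemma two_pow_le_of_bit_eq_one {x j : ℕ} (h : bit x j = 1) : 2 ^ j ≤ x := by
  by_contra! hx
  simp [bit, Nat.div_eq_of_lt hx] at h

lemma bit_sub_two_pow_self {x j : ℕ} (h : bit x j = 1) : bit (x - 2 ^ j) j = 0 := by
  obtain ⟨y, rfl⟩ := Nat.exists_eq_add_of_le' (two_pow_le_of_bit_eq_one h)
  have hdiv : (y + 2 ^ j) / 2 ^ j = y / 2 ^ j + 1 := Nat.add_div_right y (by positivity)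
  simp only [bit, Nat.add_sub_cancel] at h ⊢
  omega

/-- Adding `2 ^ j` to a number whose `j`-th bit is `0` produces no carry. -/
lemma add_two_pow_div_two_pow_of_lt {y j k : ℕ} (h : bit y j = 0) (hjk : j < k) :
    (y + 2 ^ j) / 2 ^ k = y / 2 ^ k := by
  obtain ⟨d, rfl⟩ := Nat.exists_eq_add_of_lt hjk
  have hdiv : (y + 2 ^ j) / 2 ^ j = y / 2 ^ j + 1 := Nat.add_div_right y (by positivity)
  have hodd : (y / 2 ^ j + 1) / 2 = y / 2 ^ j / 2 := by simp only [bit] at h; omega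
  rw [show 2 ^ (j + d + 1) = 2 ^ j * 2 * 2 ^ d by ring, ← Nat.div_div_eq_div_mul,
    ← Nat.div_div_eq_div_mul, ← Nat.div_div_eq_div_mul, ← Nat.div_div_eq_div_mul, hdiv, hodd]

lemma bit_add_two_pow_of_lt {j k : ℕ} (y : ℕ) (hkj : k < j) : bit (y + 2 ^ j) k = bit y k := by
  obtain ⟨d, rfl⟩ := Nat.exists_eq_add_of_lt hkj
  rw [bit, bit, show 2 ^ (k + d + 1) = 2 * 2 ^ d * 2 ^ k by ring,
    Nat.add_mul_div_right _ _ (by positivity), Nat.add_mul_mod_self_left]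

lemma bit_le_bit_add_two_pow {y j : ℕ} (h : bit y j = 0) (k : ℕ) :
    bit y k ≤ bit (y + 2 ^ j) k := by
  rcases lt_trichotomy k j with hkj | rfl | hjk
  · rw [bit_add_two_pow_of_lt y hkj]
  · rw [h]; exact Nat.zero_le _
  · rw [bit, bit, add_two_pow_div_two_pow_of_lt h hjk]

lemma add_two_pow_lt_two_pow {y j n : ℕ} (h : bit y j = 0) (hy : y < 2 ^ n) (hj : j < n) :
    y + 2 ^ j < 2 ^ n := by
  rw [← Nat.div_eq_zero_iff_lt (by positivity)] at hy ⊢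
  rwa [add_two_pow_div_two_pow_of_lt h hj]

lemma sum_bit_eq_zero_add_two_pow {β : Type*} [AddCommMonoid β] (g : ℕ → β) {n j : ℕ}
    (hj : j < n) :
    ∑ y ∈ (range (2 ^ n)).filter (fun y => bit y j = 0), g (y + 2 ^ j) =
      ∑ x ∈ (range (2 ^ n)).filter (fun x => bit x j = 1), g x := by
  refine sum_nbij' (· + 2 ^ j) (· - 2 ^ j) ?_ ?_ ?_ ?_ (fun _ _ => rfl)
  · simp only [mem_filter, mem_range]
    exact fun y ⟨hy, h⟩ => ⟨add_two_pow_lt_two_pow h hy hj, bit_add_two_pow_self h⟩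
  · simp only [mem_filter, mem_range]
    exact fun x ⟨hx, h⟩ => ⟨(Nat.sub_le x _).trans_lt hx, bit_sub_two_pow_self h⟩
  · exact fun y _ => add_tsub_cancel_right y _
  · simp only [mem_filter, mem_range]
    exact fun x ⟨_, h⟩ => Nat.sub_add_cancel (two_pow_le_of_bit_eq_one h)

lemma sum_bit_eq_zero_eq_sum_bit_eq_one {β : Type*} [AddCommMonoid β] (n : ℕ)
    (F : ℕ → ℕ → β) :
    ∑ y ∈ range (2 ^ n), ∑ j ∈ (range n).filter (fun j => bit y j = 0), F (y + 2 ^ j) y =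
      ∑ x ∈ range (2 ^ n), ∑ j ∈ (range n).filter (fun j => bit x j = 1), F x (x - 2 ^ j) := by
  calc _ = ∑ j ∈ range n, ∑ y ∈ (range (2 ^ n)).filter (fun y => bit y j = 0), F (y + 2 ^ j) y :=
        sum_comm' fun _ _ => by simp only [mem_filter, mem_range]; tauto
    _ = ∑ j ∈ range n, ∑ x ∈ (range (2 ^ n)).filter (fun x => bit x j = 1), F x (x - 2 ^ j) :=
        sum_congr rfl fun j hj => by
          simpa only [add_tsub_cancel_right] using
            sum_bit_eq_zero_add_two_pow (fun x => F x (x - 2 ^ j)) (mem_range.mp hj)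
    _ = _ := (sum_comm' fun _ _ => by simp only [mem_filter, mem_range]; tauto).symm

lemma sum_bit_eq_card (n x : ℕ) :
    ∑ j ∈ range n, (bit x j : ℝ) = ((range n).filter (fun j => bit x j = 1)).card := by
  rw [← sum_boole]
  refine sum_congr rfl fun j _ => ?_
  rcases Nat.le_one_iff_eq_zero_or_eq_one.mp (bit_le_one x j) with h | h <;> simp [h]

lemma sum_bit_le (n x : ℕ) : ∑ j ∈ range n, (bit x j : ℝ) ≤ n := by
  calc ∑ j ∈ range n, (bit x j : ℝ) ≤ ∑ _j ∈ range n, (1 : ℝ) :=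
        sum_le_sum fun j _ => by exact_mod_cast bit_le_one x j
    _ = n := by simp

lemma vM_nonneg (x : ℕ) : 0 ≤ vM x := ArithmeticFunction.vonMangoldt_nonneg

namespace IsMonotoneBool

variable {n : ℕ} {f : ℕ → ℝ}

lemma nonneg (hf : IsMonotoneBool n f) (x : ℕ) : 0 ≤ f x := by
  rcases hf.1 x with h | h <;> simp [h]

lemma apply_sub_two_pow_le (hf : IsMonotoneBool n f) {x j : ℕ} (hx : x < 2 ^ n)
    (h : bit x j = 1) : f (x - 2 ^ j) ≤ f x := by
  refine hf.2 _ _ ((Nat.sub_le x _).trans_lt hx) hx fun k _ => ?_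
  have := bit_le_bit_add_two_pow (bit_sub_two_pow_self h) k
  rwa [Nat.sub_add_cancel (two_pow_le_of_bit_eq_one h)] at this

lemma sum_apply_sub_two_pow_le (hf : IsMonotoneBool n f) {x : ℕ} (hx : x < 2 ^ n) :
    ∑ j ∈ (range n).filter (fun j => bit x j = 1), f (x - 2 ^ j) ≤
      (∑ j ∈ range n, (bit x j : ℝ)) * f x := by
  rw [sum_bit_eq_card, ← nsmul_eq_mul, ← sum_const]
  exact sum_le_sum fun j hj => hf.apply_sub_two_pow_le hx (mem_filter.mp hj).2

end IsMonotoneBool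

/-- the basic monotonicity inequality `⟨Λ̃, f⟩ ≤ n ⟨Λ, f⟩`. -/
theorem vMtilde_inner_le (n : ℕ) (f : ℕ → ℝ) (hf : IsMonotoneBool n f) :
    ip n (vMtilde n) f =
      ((2 : ℝ) ^ n)⁻¹ * ∑ x ∈ range (2 ^ n),
        vM x * ∑ j ∈ (range n).filter (fun j => bit x j = 1), f (x - 2 ^ j) ∧
    ((2 : ℝ) ^ n)⁻¹ * ∑ x ∈ range (2 ^ n),
        vM x * ∑ j ∈ (range n).filter (fun j => bit x j = 1), f (x - 2 ^ j) ≤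
      ((2 : ℝ) ^ n)⁻¹ * ∑ x ∈ range (2 ^ n),
        vM x * (∑ j ∈ range n, (bit x j : ℝ)) * f x ∧
    ((2 : ℝ) ^ n)⁻¹ * ∑ x ∈ range (2 ^ n),
        vM x * (∑ j ∈ range n, (bit x j : ℝ)) * f x ≤ (n : ℝ) * ip n vM f := by
  refine ⟨?_, ?_, ?_⟩
  · rw [ip]
    congr 1
    simp only [vMtilde, sum_mul, mul_sum]
    exact sum_bit_eq_zero_eq_sum_bit_eq_one n fun x y => vM x * f y
  · refine mul_le_mul_of_nonneg_left (sum_le_sum fun x hx => ?_) (by positivity)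
    rw [mul_assoc]
    exact mul_le_mul_of_nonneg_left (hf.sum_apply_sub_two_pow_le (mem_range.mp hx)) (vM_nonneg x)
  · rw [ip, mul_left_comm, mul_sum _ _ (n : ℝ)]
    refine mul_le_mul_of_nonneg_left (sum_le_sum fun x _ => ?_) (by positivity)
    calc vM x * (∑ j ∈ range n, (bit x j : ℝ)) * f x ≤ vM x * n * f x := by
          gcongr
          · exact hf.nonneg x
          · exact vM_nonneg x
          · exact sum_bit_le n x
      _ = n * (vM x * f x) := by ring
end
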